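/- arXiv:1912.04330 — 4 statements merged into one kernel-verified Lean document; each statement's English description precedes it below -/
import Mathlib

section
/- Let F be a number field and let S denote the (finite) set of real embeddings of F, i.e., ring homomorphisms F → ℝ. Then for any natural numbers k and l with k + l = |S|, there exists a primitive element u of F (i.e., u ∈ F with ℚ(u) = F) such that exactly k of the embeddings σ ∈ S satisfy σ(u) > 0 and exactly l of the embeddings σ ∈ S satisfy σ(u) < 0. -/
/-!
Take a primitive element `θ`. Its real conjugates `σ θ` are pairwise distinct, so a rational `q`
can be placed with exactly `l` of them below it and the other `k` above it; then `θ - q` is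
still primitive and has the required signs.
-/

open Finset IntermediateField

theorem IntermediateField.adjoin_simple_sub_algebraMap {F E : Type*} [Field F] [Field E]
    [Algebra F E] (x : E) (c : F) : F⟮x - algebraMap F E c⟯ = F⟮x⟯ := by
  refine le_antisymm ?_ ?_ <;> rw [adjoin_simple_le_iff]
  · exact sub_mem (mem_adjoin_simple_self F x) (algebraMap_mem _ c)
  · simpa using add_mem (mem_adjoin_simple_self F (x - algebraMap F E c)) (algebraMap_mem _ c)

theorem AlgHom.ext_of_adjoin_simple_eq_top {F E K : Type*} [Field F] [Field E] [Algebra F E]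
    [Semiring K] [Algebra F K] {θ : E} (hθ : F⟮θ⟯ = ⊤) ⦃φ₁ φ₂ : E →ₐ[F] K⦄
    (h : φ₁ θ = φ₂ θ) : φ₁ = φ₂ := by
  have htop := algHom_ext_of_eq_adjoin F hθ.symm
    (φ₁ := φ₁.comp (⊤ : IntermediateField F E).val)
    (φ₂ := φ₂.comp (⊤ : IntermediateField F E).val) (by rintro x rfl; exact h)
  ext x
  exact DFunLike.congr_fun htop ⟨x, mem_top⟩

section RationalCut

variable {K : Type*} [Field K] [LinearOrder K] [IsStrictOrderedRing K] [Archimedean K]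

theorem Finset.exists_rat_lt_card_filter_eq (T : Finset K) (b : K) (hb : ∀ x ∈ T, x < b)
    {k l : ℕ} (hkl : k + l = #T) :
    ∃ q : ℚ, (q : K) < b ∧ #{x ∈ T | (q : K) < x} = k ∧ #{x ∈ T | x < (q : K)} = l := by
  induction T using Finset.induction_on_max generalizing b k l with
  | empty =>
    obtain ⟨q, hq⟩ := exists_rat_lt b
    exact ⟨q, hq, by simp_all⟩
  | insert a s ha ih =>
    have hab : a < b := hb a (mem_insert_self a s)
    have has : a ∉ s := fun has => (ha a has).false
    rw [card_insert_of_notMem has] at hkl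
    cases k with
    | zero =>
      obtain ⟨q, haq, hqb⟩ := exists_rat_btwn hab
      have hs : ∀ x ∈ s, x < q := fun x hx => (ha x hx).trans haq
      refine ⟨q, hqb, ?_, ?_⟩
      · simp only [card_eq_zero, filter_eq_empty_iff, mem_insert, not_lt]
        rintro x (rfl | hx)
        exacts [haq.le, (hs x hx).le]
      · rw [filter_true_of_mem (by simpa [haq] using hs), card_insert_of_notMem has]
        omega
    | succ k =>
      obtain ⟨q, hqa, hk, hl⟩ := ih a ha (k := k) (l := l) (by omega)
      refine ⟨q, hqa.trans hab, ?_, ?_⟩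
      · rw [filter_insert, if_pos hqa, card_insert_of_notMem fun h => has (mem_filter.1 h).1, hk]
      · rwa [filter_insert, if_neg hqa.asymm]

theorem Finset.exists_rat_card_filter_eq (T : Finset K) {k l : ℕ} (hkl : k + l = #T) :
    ∃ q : ℚ, #{x ∈ T | (q : K) < x} = k ∧ #{x ∈ T | x < (q : K)} = l := by
  obtain ⟨M, hM⟩ := T.exists_le
  obtain ⟨q, -, hq⟩ :=
    T.exists_rat_lt_card_filter_eq (M + 1) (fun x hx => (hM x hx).trans_lt (lt_add_one M)) hkl
  exact ⟨q, hq⟩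

theorem exists_rat_card_lt_eq_of_injective {ι : Type*} [Finite ι] {f : ι → K}
    (hf : Function.Injective f) {k l : ℕ} (hkl : k + l = Nat.card ι) :
    ∃ q : ℚ, Nat.card {i // (q : K) < f i} = k ∧ Nat.card {i // f i < q} = l := by
  have := Fintype.ofFinite ι
  have hcard : ∀ p : K → Prop, [DecidablePred p] →
      Nat.card {i // p (f i)} = #{x ∈ univ.image f | p x} := fun p _ => by
    rw [Nat.card_eq_fintype_card, Fintype.card_subtype, filter_image,
      card_image_of_injective _ hf]
  rw [Nat.card_eq_fintype_card, ← card_univ, ← card_image_of_injective _ hf] at hkl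
  obtain ⟨q, hk, hl⟩ := (univ.image f).exists_rat_card_filter_eq hkl
  exact ⟨q, (hcard (fun x => (q : K) < x)).trans hk, (hcard (· < (q : K))).trans hl⟩

end RationalCut

/-- For a number field `F` with set `S` of real embeddings, and any `k + l = |S|`,
there is a primitive element `u` of `F` with exactly `k` embeddings positive on `u`
and exactly `l` embeddings negative on `u`. -/
theorem stmt_0 (F : Type*) [Field F] [NumberField F]
    (k l : ℕ) (hkl : k + l = Nat.card (F →+* ℝ)) :
    ∃ u : F, IntermediateField.adjoin ℚ {u} = ⊤ ∧
      Nat.card {σ : F →+* ℝ // 0 < σ u} = k ∧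
      Nat.card {σ : F →+* ℝ // σ u < 0} = l := by
  obtain ⟨θ, hθ⟩ := Field.exists_primitive_element ℚ F
  have hinj : Function.Injective fun σ : F →+* ℝ => σ θ := fun σ τ h =>
    (RingHom.equivRatAlgHom F ℝ).injective (AlgHom.ext_of_adjoin_simple_eq_top hθ h)
  obtain ⟨q, hk, hl⟩ := exists_rat_card_lt_eq_of_injective hinj hkl
  refine ⟨θ - algebraMap ℚ F q, by rwa [adjoin_simple_sub_algebraMap], ?_, ?_⟩
  · simpa only [map_sub, map_ratCast, eq_ratCast, sub_pos] using hk
  · simpa only [map_sub, map_ratCast, eq_ratCast, sub_neg] using hl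
end

section
/- For every natural number n ≥ 2 there exists a number field K of degree n over ℚ having exactly one complex infinite place and exactly n − 2 real infinite places; equivalently, exactly two of the n ring homomorphisms K → ℂ have image not contained in ℝ. -/
/-!
Take `f = g · (X² + 4) - 2` with `g = ∏_{j=1}^{m} (X - 2j)`. It is Eisenstein at 2, so a root `α`
generates a field `ℚ(α)` of degree `m + 2` whose embeddings into `ℂ` correspond to the roots of `f`,
an embedding being real exactly when its root is. At the odd numbers `1, 3, …, 2m+1` we have
`|g| ≥ 1` with alternating signs, and `x² + 4 > 2`, so `f` alternates in sign there and has `m`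
real roots. If all roots of `f` were real, every factor of `f(2i) = ∏ (2i - r)` would have norm at
least 2; but `f(2i) = -2`. So `f` has a non-real root, and together with its conjugate it accounts
for the remaining two roots.
-/

open Polynomial Complex IntermediateField ComplexConjugate

theorem Polynomial.pow_natDegree_le_norm_eval_of_forall_roots_im_eq_zero {p : ℂ[X]}
    (hp : p.Monic) (hroots : ∀ z ∈ p.roots, z.im = 0) (y : ℝ) :
    |y| ^ p.natDegree ≤ ‖p.eval (y * I)‖ := by
  have hcard : p.roots.card = p.natDegree := splits_iff_card_roots.mp (IsAlgClosed.splits p)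
  conv_rhs => rw [← prod_multiset_X_sub_C_of_monic_of_roots_card_eq hp hcard]
  rw [eval_multiset_prod, Multiset.map_map, ← normHom_apply, map_multiset_prod, Multiset.map_map,
    ← hcard, ← Multiset.prod_replicate, ← Multiset.map_const']
  refine Multiset.prod_map_le_prod_map₀ _ _ (fun _ _ => abs_nonneg y) fun z hz => ?_
  simpa [hroots z hz] using abs_im_le_norm (y * I - z)

theorem Polynomial.exists_mem_Ioo_eval_eq_zero {p : ℝ[X]} {a b : ℝ} (hab : a < b)
    (h : p.eval a * p.eval b < 0) : ∃ c ∈ Set.Ioo a b, p.eval c = 0 := by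
  have hcont : ContinuousOn (p.eval ·) (Set.Icc a b) := p.continuous.continuousOn
  rcases mul_neg_iff.mp h with ⟨ha, hb⟩ | ⟨ha, hb⟩
  · exact intermediate_value_Ioo' hab.le hcont ⟨hb, ha⟩
  · exact intermediate_value_Ioo hab.le hcont ⟨ha, hb⟩

theorem Polynomial.le_card_roots_of_eval_mul_lt_zero {p : ℝ[X]} (hp : p ≠ 0) {t : ℕ → ℝ}
    (ht : StrictMono t) {m : ℕ} (hsign : ∀ k < m, p.eval (t k) * p.eval (t (k + 1)) < 0) :
    m ≤ p.roots.card := by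
  choose r hr hroot using fun k : Fin m =>
    exists_mem_Ioo_eval_eq_zero (ht k.val.lt_succ_self) (hsign k k.2)
  have hr_mono : StrictMono r := fun a b hab =>
    calc r a < t (a + 1) := (hr a).2
      _ ≤ t b := ht.monotone (Nat.succ_le_of_lt hab)
      _ < r b := (hr b).1
  calc m = (Finset.univ : Finset (Fin m)).card := (Finset.card_fin m).symm
    _ ≤ p.roots.toFinset.card :=
        Finset.card_le_card_of_injOn r (fun k _ => by simpa [hp] using hroot k)
          hr_mono.injective.injOn
    _ ≤ p.roots.card := Multiset.toFinset_card_le _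

theorem Polynomial.conj_mem_aroots {p : ℝ[X]} {z : ℂ} (hz : z ∈ p.aroots ℂ) :
    conj z ∈ p.aroots ℂ := by
  rw [mem_aroots] at hz ⊢
  exact ⟨hz.1, by rw [← conjAe_coe, aeval_algHom_apply, hz.2, map_zero]⟩

theorem Polynomial.card_aroots_filter_im_of_le_card_roots {p : ℝ[X]} {m : ℕ}
    (hdeg : p.natDegree = m + 2) (hreal : m ≤ p.roots.card)
    {z : ℂ} (hz : z ∈ p.aroots ℂ) (hz_im : z.im ≠ 0) :
    ((p.aroots ℂ).filter (·.im = 0)).card = m ∧ ((p.aroots ℂ).filter (·.im ≠ 0)).card = 2 := by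
  have hp : p ≠ 0 := ne_zero_of_natDegree_gt (n := 0) (by omega)
  have hcard : (p.aroots ℂ).card = m + 2 := by
    rw [aroots, splits_iff_card_roots.mp (IsAlgClosed.splits _), natDegree_map, hdeg]
  have hreal_le : m ≤ ((p.aroots ℂ).filter (·.im = 0)).card := by
    calc m ≤ (p.roots.map (algebraMap ℝ ℂ)).card := (Multiset.card_map _ _).symm ▸ hreal
      _ ≤ _ := Multiset.card_le_card <| Multiset.le_filter.mpr
          ⟨map_roots_le (map_ne_zero hp), fun _ hw => by
            obtain ⟨x, -, rfl⟩ := Multiset.mem_map.mp hw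
            exact ofReal_im x⟩
  have hpair : ({z, conj z} : Multiset ℂ) ≤ (p.aroots ℂ).filter (·.im ≠ 0) := by
    have hne : z ≠ conj z := fun h => hz_im (conj_eq_iff_im.mp h.symm)
    rw [Multiset.le_iff_subset (by simpa using hne)]
    intro w hw
    simp only [Multiset.insert_eq_cons, Multiset.mem_cons, Multiset.mem_singleton] at hw
    rcases hw with rfl | rfl
    · exact Multiset.mem_filter.mpr ⟨hz, hz_im⟩
    · exact Multiset.mem_filter.mpr ⟨conj_mem_aroots hz, by simpa using hz_im⟩
  have hsum := congr_arg Multiset.card (Multiset.filter_add_not (·.im = 0) (p.aroots ℂ))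
  have := Multiset.card_le_card hpair
  rw [Multiset.card_add, hcard] at hsum
  simp only [ne_eq, Multiset.insert_eq_cons, Multiset.card_cons, Multiset.card_singleton] at this ⊢
  constructor <;> omega

theorem IntermediateField.forall_im_eq_zero_iff_gen {E : Type*} [Field E] [CharZero E] {α : E}
    (σ : ℚ⟮α⟯ →+* ℂ) : (∀ x, (σ x).im = 0) ↔ (σ (AdjoinSimple.gen ℚ α)).im = 0 := by
  refine ⟨fun h => h _, fun h x => conj_eq_iff_im.mp ?_⟩
  have hext : ((conjAe.restrictScalars ℚ : ℂ →ₐ[ℚ] ℂ).comp σ.toRatAlgHom) = σ.toRatAlgHom :=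
    adjoin_algHom_ext ℚ <| by
      rintro _ rfl
      exact conj_eq_iff_im.mpr h
  exact congr($hext x)

theorem IntermediateField.natCard_filter_ringHom_adjoin {E : Type*} [Field E] [CharZero E] {α : E}
    (hα : IsIntegral ℚ α) (P : ℂ → Prop) [DecidablePred P] :
    Nat.card {σ : ℚ⟮α⟯ →+* ℂ // P (σ (AdjoinSimple.gen ℚ α))} =
      ((minpoly ℚ α).aroots ℂ |>.filter P).card := by
  classical
  let e := algHomAdjoinIntegralEquiv ℚ (K := ℂ) hα
  have he : ∀ σ, (e σ : ℂ) = σ (AdjoinSimple.gen ℚ α) := fun σ => by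
    conv_rhs => rw [← e.symm_apply_apply σ]
    exact (algHomAdjoinIntegralEquiv_symm_apply_gen ℚ hα (e σ)).symm
  have hnodup : ((minpoly ℚ α).aroots ℂ).Nodup :=
    nodup_roots (minpoly.irreducible hα).separable.map
  calc Nat.card {σ : ℚ⟮α⟯ →+* ℂ // P (σ (AdjoinSimple.gen ℚ α))}
      = Nat.card {z : ℂ // z ∈ (minpoly ℚ α).aroots ℂ ∧ P z} :=
        Nat.card_congr <| ((RingHom.equivRatAlgHom _ _).subtypeEquiv fun _ => Iff.rfl).trans <|
          (e.subtypeEquiv fun σ => by rw [he]).trans (Equiv.subtypeSubtypeEquivSubtypeInter _ _)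
    _ = ((minpoly ℚ α).aroots ℂ |>.filter P).toFinset.card := by
        rw [← Nat.card_eq_finsetCard]
        exact Nat.card_congr (Equiv.subtypeEquivRight fun z => by simp)
    _ = _ := Multiset.toFinset_card_of_nodup (hnodup.filter P)

namespace OneComplexPlace

noncomputable def evenRootPoly (m : ℕ) : ℤ[X] := ∏ j ∈ Finset.range m, (X - C (2 * (j + 1) : ℤ))

noncomputable def perturbedPoly (m : ℕ) : ℤ[X] := evenRootPoly m * (X ^ 2 + C 4) - C 2

theorem one_le_neg_one_pow_mul_prod_odd {m k : ℕ} (hk : k ≤ m) :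
    1 ≤ (-1) ^ (m - k) * ∏ j ∈ Finset.range m, ((2 * k + 1 : ℝ) - 2 * (j + 1)) := by
  have hneg : ∏ j ∈ Finset.Ico k m, ((2 * k + 1 : ℝ) - 2 * (j + 1)) =
      (-1) ^ (m - k) * ∏ j ∈ Finset.Ico k m, (2 * (j + 1) - (2 * k + 1 : ℝ)) := by
    rw [← Nat.card_Ico, ← Finset.prod_neg]
    simp only [neg_sub]
  rw [← Finset.prod_range_mul_prod_Ico _ hk, hneg, mul_left_comm,
    ← mul_assoc ((-1 : ℝ) ^ (m - k)), ← pow_add, Even.neg_one_pow ⟨_, rfl⟩, one_mul]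
  refine one_le_mul_of_one_le_of_one_le (Finset.one_le_prod fun j hj => ?_)
    (Finset.one_le_prod fun j hj => ?_)
  · have : (j : ℝ) + 1 ≤ k := by exact_mod_cast Finset.mem_range.mp hj
    linarith
  · have : (k : ℝ) ≤ j := by exact_mod_cast (Finset.mem_Ico.mp hj).1
    linarith

variable (m : ℕ)

theorem evenRootPoly_monic : (evenRootPoly m).Monic :=
  monic_prod_of_monic _ _ fun _ _ => monic_X_sub_C _

theorem evenRootPoly_natDegree : (evenRootPoly m).natDegree = m := by
  rw [evenRootPoly, natDegree_prod_of_monic _ _ fun _ _ => monic_X_sub_C _]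
  simp only [natDegree_X_sub_C, Finset.sum_const, Finset.card_range, smul_eq_mul, mul_one]

theorem natDegree_evenRootPoly_mul : (evenRootPoly m * (X ^ 2 + C 4)).natDegree = m + 2 := by
  rw [(evenRootPoly_monic m).natDegree_mul (monic_X_pow_add_C _ two_ne_zero),
    evenRootPoly_natDegree, natDegree_X_pow_add_C]

theorem perturbedPoly_natDegree : (perturbedPoly m).natDegree = m + 2 := by
  rw [perturbedPoly, natDegree_sub_C, natDegree_evenRootPoly_mul]

theorem perturbedPoly_monic : (perturbedPoly m).Monic := by
  refine ((evenRootPoly_monic m).mul (monic_X_pow_add_C _ two_ne_zero)).sub_of_left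
    (degree_C_le.trans_lt (natDegree_pos_iff_degree_pos.mp ?_))
  rw [natDegree_evenRootPoly_mul]
  omega

theorem perturbedPoly_map_zmod_two :
    (perturbedPoly m).map (Int.castRingHom (ZMod 2)) = X ^ (m + 2) := by
  have h2 : (2 : (ZMod 2)[X]) = 0 := CharTwo.two_eq_zero
  have h4 : (4 : (ZMod 2)[X]) = 0 := by
    rw [show (4 : (ZMod 2)[X]) = 2 * 2 by norm_num, h2, zero_mul]
  simp [perturbedPoly, evenRootPoly, Polynomial.map_prod, h2, h4, pow_add]

theorem perturbedPoly_isEisensteinAt_two : (perturbedPoly m).IsEisensteinAt (Ideal.span {2}) := by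
  refine (perturbedPoly_monic m).isEisensteinAt_of_mem_of_notMem
    (by simp [Ideal.span_singleton_eq_top, Int.isUnit_iff]) (fun {n} hn => ?_) ?_
  · rw [perturbedPoly_natDegree] at hn
    have := congr_arg (coeff · n) (perturbedPoly_map_zmod_two m)
    simp only [coeff_map, coeff_X_pow, hn.ne, if_false, eq_intCast] at this
    exact Ideal.mem_span_singleton.mpr ((ZMod.intCast_zmod_eq_zero_iff_dvd _ 2).mp this)
  · have h0 : (perturbedPoly m).coeff 0 = (evenRootPoly m).coeff 0 * 4 - 2 := by
      simp [perturbedPoly, mul_coeff_zero]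
    rw [Ideal.span_singleton_pow, Ideal.mem_span_singleton, h0]
    omega

theorem perturbedPoly_irreducible_rat : Irreducible ((perturbedPoly m).map (algebraMap ℤ ℚ)) := by
  have hprim := (perturbedPoly_monic m).isPrimitive
  refine (IsPrimitive.Int.irreducible_iff_irreducible_map_cast hprim).mp
    ((perturbedPoly_isEisensteinAt_two m).irreducible ?_ hprim
      (by rw [perturbedPoly_natDegree]; omega))
  exact (Ideal.span_singleton_prime two_ne_zero).mpr Int.prime_two

theorem aeval_perturbedPoly {A : Type*} [CommRing A] (x : A) :
    aeval x (perturbedPoly m) = (∏ j ∈ Finset.range m, (x - 2 * (j + 1))) * (x ^ 2 + 4) - 2 := by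
  simp [perturbedPoly, evenRootPoly, map_ofNat]

theorem aeval_two_mul_I_perturbedPoly : aeval (2 * I) (perturbedPoly m) = -2 := by
  rw [aeval_perturbedPoly, mul_pow, I_sq]
  ring

theorem neg_one_pow_mul_aeval_perturbedPoly_odd_pos {k : ℕ} (hk : k ≤ m) :
    0 < (-1) ^ (m - k) * aeval (2 * k + 1 : ℝ) (perturbedPoly m) := by
  have hprod := one_le_neg_one_pow_mul_prod_odd hk
  have hsign : (-1 : ℝ) ^ (m - k) = 1 ∨ (-1 : ℝ) ^ (m - k) = -1 := neg_one_pow_eq_or ℝ _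
  have ht : (5 : ℝ) ≤ (2 * k + 1) ^ 2 + 4 := by nlinarith [(k.cast_nonneg : (0 : ℝ) ≤ k)]
  rw [aeval_perturbedPoly]
  rcases hsign with h | h <;> rw [h] at hprod ⊢ <;> nlinarith

theorem aeval_perturbedPoly_odd_mul_lt_zero {k : ℕ} (hk : k < m) :
    aeval (2 * k + 1 : ℝ) (perturbedPoly m) * aeval (2 * ↑(k + 1) + 1 : ℝ) (perturbedPoly m)
      < 0 := by
  have h := mul_pos (neg_one_pow_mul_aeval_perturbedPoly_odd_pos m hk.le) (neg_one_pow_mul_aeval_perturbedPoly_odd_pos m hk)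
  rw [show m - k = m - (k + 1) + 1 by omega, pow_succ] at h
  rcases neg_one_pow_eq_or ℝ (m - (k + 1)) with hs | hs <;> rw [hs] at h <;> linarith

theorem le_card_aroots_real_perturbedPoly : m ≤ ((perturbedPoly m).aroots ℝ).card := by
  refine le_card_roots_of_eval_mul_lt_zero ((perturbedPoly_monic m).map _).ne_zero
    (t := fun k => 2 * k + 1) (fun a b hab => by simp only; gcongr) fun k hk => ?_
  simpa only [eval_map_algebraMap] using aeval_perturbedPoly_odd_mul_lt_zero m hk

theorem exists_aroots_im_ne_zero_perturbedPoly : ∃ z ∈ (perturbedPoly m).aroots ℂ, z.im ≠ 0 := by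
  by_contra! hreal
  have h := pow_natDegree_le_norm_eval_of_forall_roots_im_eq_zero
    ((perturbedPoly_monic m).map (algebraMap ℤ ℂ)) hreal 2
  rw [(perturbedPoly_monic m).natDegree_map, perturbedPoly_natDegree, eval_map_algebraMap,
    ofReal_ofNat, aeval_two_mul_I_perturbedPoly] at h
  norm_num at h
  have : (2 : ℝ) ^ 2 ≤ 2 ^ (m + 2) := pow_le_pow_right₀ one_le_two (by omega)
  linarith

theorem card_aroots_filter_im_perturbedPoly :
    (((perturbedPoly m).aroots ℂ).filter (·.im = 0)).card = m ∧
      (((perturbedPoly m).aroots ℂ).filter (·.im ≠ 0)).card = 2 := by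
  obtain ⟨z, hz, hz_im⟩ := exists_aroots_im_ne_zero_perturbedPoly m
  rw [← aroots_map ℂ ℝ] at hz ⊢
  refine card_aroots_filter_im_of_le_card_roots ?_ (le_card_aroots_real_perturbedPoly m) hz hz_im
  rw [(perturbedPoly_monic m).natDegree_map, perturbedPoly_natDegree]

theorem minpoly_eq_perturbedPoly {α : ℂ} (hα : α ∈ (perturbedPoly m).aroots ℂ) :
    IsIntegral ℚ α ∧ minpoly ℚ α = (perturbedPoly m).map (algebraMap ℤ ℚ) := by
  have hmonic := (perturbedPoly_monic m).map (algebraMap ℤ ℚ)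
  have hroot : aeval α ((perturbedPoly m).map (algebraMap ℤ ℚ)) = 0 := by
    rw [aeval_map_algebraMap]
    exact (mem_aroots.mp hα).2
  exact ⟨⟨_, hmonic, hroot⟩,
    (minpoly.eq_of_irreducible_of_monic (perturbedPoly_irreducible_rat m) hroot hmonic).symm⟩

end OneComplexPlace

open OneComplexPlace in
/-- For every `n ≥ 2` there is a number field `K` of degree `n` over `ℚ` with exactly
two embeddings into `ℂ` whose image is not contained in `ℝ` (equivalently, exactly one
complex infinite place and `n - 2` real infinite places). -/
theorem stmt_5 (n : ℕ) (hn : 2 ≤ n) :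
    ∃ K : IntermediateField ℚ ℂ, FiniteDimensional ℚ K ∧
      Module.finrank ℚ K = n ∧
      Nat.card {σ : K →+* ℂ // ∃ x, (σ x).im ≠ 0} = 2 ∧
      Nat.card {σ : K →+* ℂ // ∀ x, (σ x).im = 0} = n - 2 := by
  obtain ⟨m, rfl⟩ : ∃ m, n = m + 2 := ⟨n - 2, by omega⟩
  obtain ⟨α, hα, -⟩ := exists_aroots_im_ne_zero_perturbedPoly m
  obtain ⟨hint, hmin⟩ := minpoly_eq_perturbedPoly m hα
  have hroots : (minpoly ℚ α).aroots ℂ = (perturbedPoly m).aroots ℂ := by rw [hmin, aroots_map]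
  obtain ⟨hreal, hnonreal⟩ := card_aroots_filter_im_perturbedPoly m
  refine ⟨ℚ⟮α⟯, adjoin.finiteDimensional hint, ?_, ?_, ?_⟩
  · rw [adjoin.finrank hint, hmin, (perturbedPoly_monic m).natDegree_map, perturbedPoly_natDegree]
  · rw [← hnonreal, ← hroots, ← natCard_filter_ringHom_adjoin hint]
    exact Nat.card_congr <| Equiv.subtypeEquivRight fun σ => by
      rw [← not_forall, forall_im_eq_zero_iff_gen]
  · rw [Nat.add_sub_cancel, ← hreal, ← hroots, ← natCard_filter_ringHom_adjoin hint]
    exact Nat.card_congr <| Equiv.subtypeEquivRight fun σ => forall_im_eq_zero_iff_gen σ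
end

section
/- Let n ≥ 2, let k, k₁, …, k_{n−2} be positive even integers with k₁, …, k_{n−2} pairwise distinct, and set f = (X² + k) · ∏_{i=1}^{n−2} (X − kᵢ) ∈ ℝ[X]. Then there exists ε > 0 such that for every real number a with |a| < ε, the set { x ∈ ℝ : f(x) + a = 0 } has exactly n − 2 elements, i.e., the polynomial f + a has exactly n − 2 distinct real roots. -/
/-!
By the inverse function theorem, `f` is injective on a neighbourhood of each simple root and maps
it onto a neighbourhood of `0`. A polynomial map is closed, so the image of the complement of
these (pairwise disjoint, open) neighbourhoods is a closed set missing `0`. Hence for small `a`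
the equation `f x = -a` has exactly one solution near each real root and none elsewhere. The real
roots of `f` are the `kᵢ`, all simple, because `X² + k` has no real zero.
-/

open Polynomial Set Filter Topology

theorem HasStrictDerivAt.exists_isOpen_injOn {𝕜 : Type*} [NontriviallyNormedField 𝕜]
    [CompleteSpace 𝕜] {f : 𝕜 → 𝕜} {f' a : 𝕜} (hf : HasStrictDerivAt f f' a) (hf' : f' ≠ 0) :
    ∃ t, IsOpen t ∧ a ∈ t ∧ InjOn f t := by
  obtain ⟨t, hinv, ht, hat⟩ := eventually_nhds_iff.1 (hf.eventually_left_inverse hf')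
  exact ⟨t, ht, hat, fun x hx y hy hxy => by rw [← hinv x hx, ← hinv y hy, hxy]⟩

theorem Set.ncard_eq_of_pairwiseDisjoint_cover {α ι : Type*} {S : Set α} {Z : Set ι}
    {U : ι → Set α} (hU : Z.PairwiseDisjoint U) (hcover : S ⊆ ⋃ z ∈ Z, U z)
    (hne : ∀ z ∈ Z, (S ∩ U z).Nonempty) (hsub : ∀ z ∈ Z, (S ∩ U z).Subsingleton) :
    S.ncard = Z.ncard := by
  choose x hx using hne
  refine (ncard_congr x (fun z hz => (hx z hz).1) (fun z w hz hw hzw => ?_) fun y hy => ?_).symm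
  · by_contra hne
    exact disjoint_left.1 (hU hz hw hne) (hx z hz).2 (hzw ▸ (hx w hw).2)
  · obtain ⟨z, hz, hyz⟩ := mem_iUnion₂.1 (hcover hy)
    exact ⟨z, hz, hsub z hz (hx z hz) ⟨hy, hyz⟩⟩

section RegularValue

variable {𝕜 : Type*} [NontriviallyNormedField 𝕜]

theorem eventually_ncard_preimage_eq_of_isClosedMap [CompleteSpace 𝕜] {f f' : 𝕜 → 𝕜} {c : 𝕜}
    (hclosed : IsClosedMap f) (hfin : (f ⁻¹' {c}).Finite)
    (hf : ∀ x ∈ f ⁻¹' {c}, HasStrictDerivAt f (f' x) x) (hf' : ∀ x ∈ f ⁻¹' {c}, f' x ≠ 0) :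
    ∀ᶠ b in 𝓝 c, (f ⁻¹' {b}).ncard = (f ⁻¹' {c}).ncard := by
  set Z := f ⁻¹' {c}
  obtain ⟨U, hU, hUdisj⟩ := hfin.t2_separation
  choose! V hVo hzV hVinj using fun z hz => (hf z hz).exists_isOpen_injOn (hf' z hz)
  set W := fun z => U z ∩ V z
  have hWo : ∀ z ∈ Z, IsOpen (W z) := fun z hz => (hU z).2.inter (hVo z hz)
  have hzW : ∀ z ∈ Z, z ∈ W z := fun z hz => ⟨(hU z).1, hzV z hz⟩
  have hnear : ∀ z ∈ Z, ∀ᶠ b in 𝓝 c, b ∈ f '' W z := by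
    intro z hz
    have := image_mem_map (m := f) ((hWo z hz).mem_nhds (hzW z hz))
    rwa [(hf z hz).map_nhds_eq (hf' z hz), show f z = c from hz] at this
  have hfar : ∀ᶠ b in 𝓝 c, f ⁻¹' {b} ⊆ ⋃ z ∈ Z, W z := by
    have hF : IsClosed (f '' (⋃ z ∈ Z, W z)ᶜ) := hclosed _ (isOpen_biUnion hWo).isClosed_compl
    have hc : c ∉ f '' (⋃ z ∈ Z, W z)ᶜ := by
      rintro ⟨x, hx, hxc⟩
      exact hx (mem_biUnion hxc (hzW x hxc))
    filter_upwards [hF.isOpen_compl.mem_nhds hc] with b hb x hx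
    by_contra h
    exact hb ⟨x, h, hx⟩
  filter_upwards [hfar, (eventually_all_finite hfin).2 hnear] with b hcover hex
  refine ncard_eq_of_pairwiseDisjoint_cover (hUdisj.mono fun z => inter_subset_left) hcover
    (fun z hz => ?_) fun z hz x hx y hy => hVinj z hz hx.2.2 hy.2.2 (hx.1.trans hy.1.symm)
  obtain ⟨x, hx, hxb⟩ := hex z hz
  exact ⟨x, hxb, hx⟩

theorem Polynomial.eventually_ncard_preimage_eval_eq [ProperSpace 𝕜] (p : 𝕜[X]) {c : 𝕜}
    (hp : ∀ x, p.eval x = c → p.derivative.eval x ≠ 0) :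
    ∀ᶠ b in 𝓝 c, (p.eval ⁻¹' {b}).ncard = (p.eval ⁻¹' {c}).ncard := by
  have hpc : p - C c ≠ 0 := by
    intro h
    rw [sub_eq_zero] at h
    exact hp 0 (by simp [h]) (by simp [h])
  have hfin : (p.eval ⁻¹' {c}).Finite := by
    have := finite_setOfPred_isRoot hpc
    simp only [IsRoot.def, eval_sub, eval_C, sub_eq_zero] at this
    exact this
  exact eventually_ncard_preimage_eq_of_isClosedMap p.isClosedMap_eval hfin
    (fun x _ => p.hasStrictDerivAt x) hp

end RegularValue

namespace Polynomial

variable {R : Type*} [CommRing R] {ι : Type*} [Fintype ι]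

theorem eval_derivative_X_sub_C_mul (z : R) (g : R[X]) :
    ((X - C z) * g).derivative.eval z = g.eval z := by
  simp [derivative_mul]

variable [IsDomain R] {q : R[X]}

theorem eval_mul_prod_X_sub_C_eq_zero_iff (hq : ∀ x, q.eval x ≠ 0) (r : ι → R) (x : R) :
    (q * ∏ i, (X - C (r i))).eval x = 0 ↔ x ∈ range r := by
  rw [eval_mul, mul_eq_zero, or_iff_right (hq x), eval_prod, Finset.prod_eq_zero_iff]
  simp [sub_eq_zero, eq_comm]

theorem eval_derivative_mul_prod_X_sub_C_ne_zero (hq : ∀ x, q.eval x ≠ 0) {r : ι → R}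
    (hr : Function.Injective r) (j : ι) :
    (q * ∏ i, (X - C (r i))).derivative.eval (r j) ≠ 0 := by
  classical
  rw [← Finset.mul_prod_erase _ _ (Finset.mem_univ j), mul_left_comm,
    eval_derivative_X_sub_C_mul]
  simp [eval_prod, hq, Finset.prod_eq_zero_iff, sub_eq_zero, hr.eq_iff]

end Polynomial

theorem stmt_6_general (n : ℕ) (k : ℤ) (hk : 0 < k)
    (ki : Fin (n - 2) → ℤ)
    (hinj : Function.Injective ki) :
    ∃ ε > (0 : ℝ), ∀ a : ℝ, |a| < ε →
      Set.ncard {x : ℝ | Polynomial.eval x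
        ((Polynomial.X ^ 2 + Polynomial.C (k : ℝ)) *
          ∏ i : Fin (n - 2), (Polynomial.X - Polynomial.C ((ki i : ℝ)))) + a = 0} =
        n - 2 := by
  set r : Fin (n - 2) → ℝ := fun i => (ki i : ℝ)
  have hr : Function.Injective r := Int.cast_injective.comp hinj
  have hq : ∀ x : ℝ, (X ^ 2 + C (k : ℝ)).eval x ≠ 0 := fun x => by
    have : (0 : ℝ) < k := by exact_mod_cast hk
    simp only [eval_add, eval_pow, eval_X, eval_C]
    positivity
  set f := (X ^ 2 + C (k : ℝ)) * ∏ i, (X - C (r i))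
  have hroots : f.eval ⁻¹' {0} = range r := Set.ext (eval_mul_prod_X_sub_C_eq_zero_iff hq r)
  have hsimple : ∀ x, f.eval x = 0 → f.derivative.eval x ≠ 0 := by
    rintro x (hx : x ∈ f.eval ⁻¹' {0})
    obtain ⟨j, rfl⟩ := hroots ▸ hx
    exact eval_derivative_mul_prod_X_sub_C_ne_zero hq hr j
  obtain ⟨ε, hε, hball⟩ := Metric.eventually_nhds_iff.1 (f.eventually_ncard_preimage_eval_eq hsimple)
  refine ⟨ε, hε, fun a ha => ?_⟩
  have := @hball (-a) (by simpa using ha)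
  rw [hroots, ncard_range_of_injective hr, Nat.card_eq_fintype_card, Fintype.card_fin] at this
  rw [← this]
  congr 1
  ext x
  simp [add_eq_zero_iff_eq_neg]

/-- Let `f = (X² + k) ∏ (X - kᵢ)` with `k, k₁, …, k_{n-2}` positive even integers and
the `kᵢ` pairwise distinct.  Then there is `ε > 0` such that for any real `a` with
`|a| < ε`, the polynomial `f + a` has exactly `n - 2` distinct real roots. -/
theorem stmt_6 (n : ℕ) (hn : 2 ≤ n) (k : ℤ) (hk : 0 < k) (hke : Even k)
    (ki : Fin (n - 2) → ℤ) (hki : ∀ i, 0 < ki i) (hkie : ∀ i, Even (ki i))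
    (hinj : Function.Injective ki) :
    ∃ ε > (0 : ℝ), ∀ a : ℝ, |a| < ε →
      Set.ncard {x : ℝ | Polynomial.eval x
        ((Polynomial.X ^ 2 + Polynomial.C (k : ℝ)) *
          ∏ i : Fin (n - 2), (Polynomial.X - Polynomial.C ((ki i : ℝ)))) + a = 0} =
        n - 2 :=
  stmt_6_general n k hk ki hinj
end

section
/- Let l ≥ 1 be an integer and let f = ∏_{i=0}^{l} (1 + X^{2i+1}) ∈ ℤ[X], a polynomial of degree (l+1)². Then the coefficient of X² in f and the coefficient of X^{(l+1)² − 2} in f are both zero, while for every natural number n with 0 ≤ n ≤ (l+1)² and n ≠ 2 and n ≠ (l+1)² − 2, the coefficient of Xⁿ in f is nonzero. -/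
/-!
Expanding the product, the coefficient of `Xⁿ` counts the subsets of `{1, 3, …, 2l+1}` with
sum `n`, so it vanishes exactly when `n` is not such a subset sum. A sum of distinct odd numbers
equal to `2` would only use `1`, so `2` is never one; passing to complements exchanges `n` and
`(l+1)² - n`, which rules out `(l+1)² - 2`. Every other `n ≤ (l+1)²` is a subset sum, by induction
on `l`: the new odd number `2l+3` covers the range above `(l+1)²`, and `(l+1)² - 2` itself, which
was missing before, is `(l² - 4) + (2l+3)`.
-/

open Polynomial Finset

theorem coeff_prod_one_add_X_pow {R ι : Type*} [CommSemiring R] (s : Finset ι) (w : ι → ℕ)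
    (n : ℕ) :
    (∏ i ∈ s, (1 + X ^ w i : R[X])).coeff n = #{t ∈ s.powerset | ∑ i ∈ t, w i = n} := by
  simp only [prod_one_add, prod_pow_eq_pow_sum, finsetSum_coeff, coeff_X_pow, card_filter,
    Nat.cast_sum, Nat.cast_ite, Nat.cast_one, Nat.cast_zero, eq_comm]

theorem coeff_prod_one_add_X_pow_ne_zero_iff {R ι : Type*} [CommSemiring R] [CharZero R]
    (s : Finset ι) (w : ι → ℕ) (n : ℕ) :
    (∏ i ∈ s, (1 + X ^ w i : R[X])).coeff n ≠ 0 ↔ ∃ t ⊆ s, ∑ i ∈ t, w i = n := by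
  simp [coeff_prod_one_add_X_pow]

theorem sum_range_two_mul_add_one (k : ℕ) : ∑ i ∈ range k, (2 * i + 1) = k ^ 2 := by
  induction k with
  | zero => simp
  | succ k ih => rw [sum_range_succ, ih]; ring

def IsSumOfDistinctOdds (l n : ℕ) : Prop :=
  ∃ t ⊆ range (l + 1), ∑ i ∈ t, (2 * i + 1) = n

namespace IsSumOfDistinctOdds

variable {l n : ℕ}

theorem mono (h : IsSumOfDistinctOdds l n) : IsSumOfDistinctOdds (l + 1) n := by
  obtain ⟨t, hts, rfl⟩ := h
  exact ⟨t, hts.trans (range_subset_range.2 (l + 1).le_succ), rfl⟩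

theorem add_succ (h : IsSumOfDistinctOdds l n) : IsSumOfDistinctOdds (l + 1) (n + (2 * l + 3)) := by
  obtain ⟨t, hts, rfl⟩ := h
  have hnot : l + 1 ∉ t := fun hl => by simpa using hts hl
  refine ⟨insert (l + 1) t, ?_, ?_⟩
  · rw [range_add_one (n := l + 1)]
    exact insert_subset_insert _ hts
  · rw [sum_insert hnot]
    ring

theorem compl (h : IsSumOfDistinctOdds l n) : IsSumOfDistinctOdds l ((l + 1) ^ 2 - n) := by
  obtain ⟨t, hts, rfl⟩ := h
  refine ⟨range (l + 1) \ t, sdiff_subset, ?_⟩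
  rw [← sum_range_two_mul_add_one, ← sum_sdiff hts, Nat.add_sub_cancel]

theorem ne_two (h : IsSumOfDistinctOdds l n) : n ≠ 2 := by
  obtain ⟨t, -, rfl⟩ := h
  intro h2
  have ht : t ⊆ {0} := fun i hi => by
    have := single_le_sum (fun j _ => (2 * j + 1).zero_le) hi
    simp only [mem_singleton]
    omega
  have := sum_le_sum_of_subset (f := fun i => 2 * i + 1) ht
  simp only [sum_singleton] at this
  omega

theorem ne_sq_sub_two (hl : 1 ≤ l) (h : IsSumOfDistinctOdds l n) : n ≠ (l + 1) ^ 2 - 2 := by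
  rintro rfl
  have h4 : 4 ≤ (l + 1) ^ 2 := by nlinarith
  exact h.compl.ne_two (by omega)

theorem of_le (hl : 1 ≤ l) (hn : n ≤ (l + 1) ^ 2) (h2 : n ≠ 2) (h3 : n ≠ (l + 1) ^ 2 - 2) :
    IsSumOfDistinctOdds l n := by
  induction l, hl using Nat.le_induction generalizing n with
  | base =>
    interval_cases n
    · exact ⟨∅, by simp, rfl⟩
    · exact ⟨{0}, by simp, rfl⟩
    · exact absurd rfl h2
    · exact ⟨{1}, by simp, rfl⟩
    · exact ⟨{0, 1}, by decide, rfl⟩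
  | succ l hl ih =>
    by_cases hlow : n ≤ (l + 1) ^ 2 ∧ n ≠ (l + 1) ^ 2 - 2
    · exact (ih hlow.1 h2 hlow.2).mono
    have hsq : (l + 1) ^ 2 = l * l + 2 * l + 1 := by ring
    have hsq' : (l + 1 + 1) ^ 2 = l * l + 4 * l + 4 := by ring
    have hsix : l * l ≠ 6 := by
      rcases Nat.lt_or_ge l 3 with h | h
      · interval_cases l <;> decide
      · nlinarith
    have hsmall : l = 1 ∧ l * l = 1 ∨ 4 ≤ l * l := by
      rcases hl.eq_or_lt with rfl | hl2
      · exact .inl ⟨rfl, rfl⟩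
      · exact .inr (Nat.mul_le_mul hl2 hl2)
    obtain ⟨m, rfl⟩ : ∃ m, n = m + (2 * l + 3) := ⟨n - (2 * l + 3), by omega⟩
    exact (ih (by omega) (by omega) (by omega)).add_succ

end IsSumOfDistinctOdds

theorem coeff_prod_range_one_add_X_pow_odd_ne_zero_iff {l n : ℕ} :
    (∏ i ∈ range (l + 1), (1 + (X : ℤ[X]) ^ (2 * i + 1))).coeff n ≠ 0 ↔
      IsSumOfDistinctOdds l n :=
  coeff_prod_one_add_X_pow_ne_zero_iff _ _ _

/-- For `f = (1+X)(1+X³)⋯(1+X^{2l+1})` with `l ≥ 1`, the coefficients of `X²` and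
`X^{(l+1)² - 2}` vanish, and all other coefficients of `Xⁿ` for `0 ≤ n ≤ (l+1)²`
are nonzero. -/
theorem stmt_8 (l : ℕ) (hl : 1 ≤ l) :
    (∏ i ∈ Finset.range (l + 1),
        (1 + (Polynomial.X : Polynomial ℤ) ^ (2 * i + 1))).coeff 2 = 0 ∧
    (∏ i ∈ Finset.range (l + 1),
        (1 + (Polynomial.X : Polynomial ℤ) ^ (2 * i + 1))).coeff ((l + 1) ^ 2 - 2) = 0 ∧
    ∀ n : ℕ, n ≤ (l + 1) ^ 2 → n ≠ 2 → n ≠ (l + 1) ^ 2 - 2 →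
      (∏ i ∈ Finset.range (l + 1),
        (1 + (Polynomial.X : Polynomial ℤ) ^ (2 * i + 1))).coeff n ≠ 0 := by
  refine ⟨?_, ?_, fun n hn h2 h3 =>
    coeff_prod_range_one_add_X_pow_odd_ne_zero_iff.2 (.of_le hl hn h2 h3)⟩
  · by_contra h
    exact (coeff_prod_range_one_add_X_pow_odd_ne_zero_iff.1 h).ne_two rfl
  · by_contra h
    exact (coeff_prod_range_one_add_X_pow_odd_ne_zero_iff.1 h).ne_sq_sub_two hl rfl
end
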